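/- arXiv:2307.10104 — 3 statements merged into one kernel-verified Lean document; each statement's English description precedes it below -/
import Mathlib

section
/- Let φ : U → Y be S-differentiable and (x,h) ∈ U × S with the segment [x, x+h] contained in U_S°. Then the map f : [0,1] → Y, t ↦ φ(x+th), is right-hand differentiable on [0,1) with f'_+(t) = D_Sφ(x+th)(h); if moreover −S ⊆ S, then f is differentiable on [0,1] with derivative D_Sφ(x+th)(h). -/
open Filter Topology Set RealInnerProductSpace

/-- `S` is star-convex with center `0`. -/
def StarCvx {X : Type*} [NormedAddCommGroup X] [NormedSpace ℝ X] (S : Set X) : Prop :=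
  ∀ h ∈ S, ∀ t : ℝ, 0 ≤ t → t ≤ 1 → t • h ∈ S

/-- The closure `V` of the linear span of `S`. -/
def spanCl {X : Type*} [NormedAddCommGroup X] [NormedSpace ℝ X] (S : Set X) : Submodule ℝ X :=
  (Submodule.span ℝ S).topologicalClosure

theorem mem_spanCl {X : Type*} [NormedAddCommGroup X] [NormedSpace ℝ X] {S : Set X} {h : X}
    (hS : h ∈ S) : h ∈ spanCl S :=
  Submodule.le_topologicalClosure _ (Submodule.subset_span hS)

/-- The `S`-interior of `U`. -/
def SInterior {X : Type*} [NormedAddCommGroup X] [NormedSpace ℝ X] (S U : Set X) : Set X :=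
  {x ∈ U | ∃ δ > 0, ∀ h ∈ S, ‖h‖ < δ → x + h ∈ U}

/-- `φ` is `S`-differentiable at `x` with `S`-oriented derivative `L ∈ L(V,Y)`:
`φ(x+h) = φ(x) + L(h) + o(‖h‖)` as `h → 0` on `S`. -/
def HasSDerivAt {X Y : Type*} [NormedAddCommGroup X] [NormedSpace ℝ X]
    [NormedAddCommGroup Y] [NormedSpace ℝ Y]
    (S : Set X) (φ : X → Y) (L : spanCl S →L[ℝ] Y) (x : X) : Prop :=
  ∀ ε > 0, ∃ δ > 0, ∀ h, ∀ hS : h ∈ S, ‖h‖ < δ →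
    ‖φ (x + h) - φ x - L ⟨h, mem_spanCl hS⟩‖ ≤ ε * ‖h‖

/-- `φ` is `S`-continuous at `x`: `φ(x+h) → φ(x)` as `h → 0` on `S`. -/
def SContAt {X Y : Type*} [NormedAddCommGroup X] [NormedSpace ℝ X]
    [NormedAddCommGroup Y] [NormedSpace ℝ Y] (S : Set X) (φ : X → Y) (x : X) : Prop :=
  ∀ ε > 0, ∃ δ > 0, ∀ h ∈ S, ‖h‖ < δ → ‖φ (x + h) - φ x‖ ≤ ε

/-!
Along the line `s ↦ x + s • h` the increment from `t` to `s` is `(s - t) • h`. By star-convexity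
it lies in `S` for `s ≥ t` close to `t` (for all `s` close to `t` when `S` is balanced), so the
`o(‖k‖)` estimate of the `S`-derivative at `x + t • h` specializes to the one-variable estimate
defining the (one-sided) derivative, with `L ((s - t) • h) = (s - t) • L h`.
-/

section

variable {X Y : Type*} [NormedAddCommGroup X] [NormedSpace ℝ X]
  [NormedAddCommGroup Y] [NormedSpace ℝ Y] {S : Set X}

theorem StarCvx.smul_mem_of_abs_le (hS : StarCvx S) (hneg : ∀ k ∈ S, -k ∈ S) {h : X}
    (hh : h ∈ S) {r : ℝ} (hr : |r| ≤ 1) : r • h ∈ S := by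
  rcases le_or_gt 0 r with hr0 | hr0
  · exact hS h hh r hr0 (by rwa [abs_of_nonneg hr0] at hr)
  · rw [show r • h = (-r) • -h by rw [neg_smul_neg]]
    exact hS (-h) (hneg h hh) (-r) (neg_nonneg.mpr hr0.le) (by rwa [abs_of_neg hr0] at hr)

theorem StarCvx.eventually_sub_smul_mem_nhdsGE (hS : StarCvx S) {h : X} (hh : h ∈ S) (t : ℝ) :
    ∀ᶠ s in 𝓝[≥] t, (s - t) • h ∈ S := by
  filter_upwards [Ico_mem_nhdsGE (lt_add_one t)] with s ⟨hts, hst⟩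
  exact hS h hh (s - t) (sub_nonneg.mpr hts) (by linarith)

theorem StarCvx.eventually_sub_smul_mem_nhds (hS : StarCvx S) (hneg : ∀ k ∈ S, -k ∈ S) {h : X}
    (hh : h ∈ S) (t : ℝ) : ∀ᶠ s in 𝓝 t, (s - t) • h ∈ S := by
  filter_upwards [Ioo_mem_nhds (sub_one_lt t) (lt_add_one t)] with s ⟨hts, hst⟩
  exact hS.smul_mem_of_abs_le hneg hh (abs_le.mpr ⟨by linarith, by linarith⟩)

theorem HasSDerivAt.hasDerivWithinAt_along_line {φ : X → Y} {L : spanCl S →L[ℝ] Y} {x h : X}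
    {t : ℝ} (hφ : HasSDerivAt S φ L (x + t • h)) (hh : h ∈ S) {A : Set ℝ}
    (hA : ∀ᶠ s in 𝓝[A] t, (s - t) • h ∈ S) :
    HasDerivWithinAt (fun s : ℝ => φ (x + s • h)) (L ⟨h, mem_spanCl hh⟩) A t := by
  rw [hasDerivWithinAt_iff_isLittleO, Asymptotics.isLittleO_iff]
  intro c hc
  obtain ⟨δ, hδ, hbound⟩ := hφ (c / (‖h‖ + 1)) (by positivity)
  have hlim : Tendsto (fun s : ℝ => (s - t) • h) (𝓝 t) (𝓝 0) := by
    have hcont : Continuous fun s : ℝ => (s - t) • h := by fun_prop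
    simpa using hcont.tendsto t
  have hsmall : ∀ᶠ s in 𝓝[A] t, ‖(s - t) • h‖ < δ := by
    refine Eventually.filter_mono nhdsWithin_le_nhds ?_
    simpa only [Metric.mem_ball, dist_zero_right] using
      hlim.eventually (Metric.ball_mem_nhds (0 : X) hδ)
  filter_upwards [hA, hsmall] with s hs hsδ
  have hstep := hbound _ hs hsδ
  rw [show x + t • h + (s - t) • h = x + s • h by rw [sub_smul]; abel,
    show (⟨(s - t) • h, mem_spanCl hs⟩ : spanCl S) = (s - t) • ⟨h, mem_spanCl hh⟩ from rfl,
    map_smul] at hstep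
  calc ‖φ (x + s • h) - φ (x + t • h) - (s - t) • L ⟨h, mem_spanCl hh⟩‖
      ≤ c / (‖h‖ + 1) * ‖(s - t) • h‖ := hstep
    _ = c * (‖h‖ / (‖h‖ + 1)) * ‖s - t‖ := by rw [norm_smul]; ring
    _ ≤ c * 1 * ‖s - t‖ := by
        gcongr
        exact (div_le_one (by positivity)).mpr (by linarith)
    _ = c * ‖s - t‖ := by ring

end

theorem sDeriv_along_path_general {X Y : Type*} [NormedAddCommGroup X] [NormedSpace ℝ X]
    [NormedAddCommGroup Y] [NormedSpace ℝ Y]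
    {S : Set X} (hS : StarCvx S) {U : Set X} {φ : X → Y}
    (D : X → spanCl S →L[ℝ] Y) (hd : ∀ z ∈ SInterior S U, HasSDerivAt S φ (D z) z)
    {x h : X} (hh : h ∈ S)
    (hseg : ∀ t : ℝ, 0 ≤ t → t ≤ 1 → x + t • h ∈ SInterior S U) :
    (∀ t : ℝ, 0 ≤ t → t < 1 →
      HasDerivWithinAt (fun s : ℝ => φ (x + s • h))
        (D (x + t • h) ⟨h, mem_spanCl hh⟩) (Set.Ici t) t) ∧
    ((∀ k ∈ S, -k ∈ S) → ∀ t : ℝ, 0 ≤ t → t ≤ 1 →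
      HasDerivWithinAt (fun s : ℝ => φ (x + s • h))
        (D (x + t • h) ⟨h, mem_spanCl hh⟩) (Set.Icc 0 1) t) := by
  refine ⟨fun t ht ht1 => ?_, fun hneg t ht ht1 => ?_⟩
  · exact (hd _ (hseg t ht ht1.le)).hasDerivWithinAt_along_line hh
      (hS.eventually_sub_smul_mem_nhdsGE hh t)
  · have hderiv := (hd _ (hseg t ht ht1)).hasDerivWithinAt_along_line hh (A := univ)
      (by simpa only [nhdsWithin_univ] using hS.eventually_sub_smul_mem_nhds hneg hh t)
    exact (hasDerivWithinAt_univ.mp hderiv).hasDerivWithinAt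

/-- along a segment `[x, x+h] ⊆ U_S°` the map `t ↦ φ(x+th)` is right-hand
differentiable with right derivative `D_Sφ(x+th)(h)`; if moreover `−S ⊆ S`, it is
differentiable on `[0,1]` with that derivative. -/
theorem sDeriv_along_path {X Y : Type*} [NormedAddCommGroup X] [NormedSpace ℝ X]
    [CompleteSpace X] [NormedAddCommGroup Y] [NormedSpace ℝ Y] [CompleteSpace Y]
    {S : Set X} (hS : StarCvx S) {U : Set X} {φ : X → Y}
    (D : X → spanCl S →L[ℝ] Y) (hd : ∀ z ∈ SInterior S U, HasSDerivAt S φ (D z) z)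
    {x h : X} (hxU : x ∈ U) (hh : h ∈ S)
    (hseg : ∀ t : ℝ, 0 ≤ t → t ≤ 1 → x + t • h ∈ SInterior S U) :
    (∀ t : ℝ, 0 ≤ t → t < 1 →
      HasDerivWithinAt (fun s : ℝ => φ (x + s • h))
        (D (x + t • h) ⟨h, mem_spanCl hh⟩) (Set.Ici t) t) ∧
    ((∀ k ∈ S, -k ∈ S) → ∀ t : ℝ, 0 ≤ t → t ≤ 1 →
      HasDerivWithinAt (fun s : ℝ => φ (x + s • h))
        (D (x + t • h) ⟨h, mem_spanCl hh⟩) (Set.Icc 0 1) t) :=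
  sDeriv_along_path_general hS D hd hh hseg
end

section
/- Mean value inequality for the oriented derivative: let S be balanced, φ : U → Y be S-differentiable, and (x,h) ∈ U × S with [x,x+h] ⊆ U_S°. Then |φ(x+h) − φ(x)| ≤ sup_{t∈(0,1)} |D_Sφ(x+th)| · |h|. -/
/-
Restrict `φ` to the segment, `g t = φ (x + t • h)`. Since `S` is balanced and star-convex, every
increment `(s - t) • h` with `s, t ∈ [0, 1]` lies in `S`, so the `S`-derivative at `x + t • h`
makes `g` differentiable within `[0, 1]` with `g' t = D (x + t • h) h`, of norm at most `C ‖h‖`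
on `(0, 1)`. Balancedness is what gives the left derivative, hence left continuity, at `t = 1`.
The one-dimensional mean value inequality with the bound assumed only on the open interval then
concludes; it follows from the scalar mean value theorem applied to `ℓ ∘ g`, where `ℓ` is a
norming functional of `g 1 - g 0` given by Hahn–Banach.
-/

open Filter Topology Set RealInnerProductSpace

theorem StarCvx.smul_mem_of_abs_le_one {X : Type*} [NormedAddCommGroup X] [NormedSpace ℝ X]
    {S : Set X} (hS : StarCvx S) (hbal : ∀ k ∈ S, -k ∈ S) {h : X} (hh : h ∈ S) {s : ℝ}
    (hs : |s| ≤ 1) : s • h ∈ S := by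
  rcases le_total 0 s with hs0 | hs0
  · exact hS h hh s hs0 ((le_abs_self s).trans hs)
  · simpa using hbal _ (hS h hh (-s) (neg_nonneg.2 hs0) ((neg_le_abs s).trans hs))

theorem HasSDerivAt.hasDerivWithinAt_comp_add_smul {X Y : Type*} [NormedAddCommGroup X]
    [NormedSpace ℝ X] [NormedAddCommGroup Y] [NormedSpace ℝ Y] {S : Set X} {φ : X → Y}
    {L : spanCl S →L[ℝ] Y} {x h : X} {t : ℝ} (hφ : HasSDerivAt S φ L (x + t • h)) (hh : h ∈ S)
    {T : Set ℝ} (hT : ∀ s ∈ T, (s - t) • h ∈ S) :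
    HasDerivWithinAt (fun s => φ (x + s • h)) (L ⟨h, mem_spanCl hh⟩) T t := by
  rw [hasDerivWithinAt_iff_isLittleO, Asymptotics.isLittleO_iff]
  intro c hc
  obtain ⟨δ, hδ, hδφ⟩ := hφ (c / (‖h‖ + 1)) (by positivity)
  have hsmall : ∀ᶠ s in 𝓝 t, ‖(s - t) • h‖ < δ := by
    have : Tendsto (fun s : ℝ => ‖(s - t) • h‖) (𝓝 t) (𝓝 0) :=
      ((continuous_id.sub continuous_const).smul continuous_const).norm.tendsto' t 0 (by simp)
    exact this.eventually (gt_mem_nhds hδ)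
  filter_upwards [nhdsWithin_le_nhds hsmall, self_mem_nhdsWithin] with s hs hsT
  have hL : L ⟨(s - t) • h, mem_spanCl (hT s hsT)⟩ = (s - t) • L ⟨h, mem_spanCl hh⟩ :=
    L.map_smul (s - t) ⟨h, mem_spanCl hh⟩
  have hx : x + t • h + (s - t) • h = x + s • h := by module
  have key := hδφ _ (hT s hsT) hs
  rw [hx, hL] at key
  calc _ ≤ c / (‖h‖ + 1) * ‖(s - t) • h‖ := key
    _ = c * ‖s - t‖ * (‖h‖ / (‖h‖ + 1)) := by rw [norm_smul]; field_simp
    _ ≤ c * ‖s - t‖ * 1 := by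
        gcongr
        exact (div_le_one (by positivity)).2 (by linarith)
    _ = c * ‖s - t‖ := mul_one _

theorem norm_image_sub_le_of_norm_deriv_le_Ioo {E : Type*} [NormedAddCommGroup E]
    [NormedSpace ℝ E] {f f' : ℝ → E} {a b C : ℝ} (hab : a ≤ b) (hf : ContinuousOn f (Icc a b))
    (hf' : ∀ t ∈ Ioo a b, HasDerivAt f (f' t) t) (bound : ∀ t ∈ Ioo a b, ‖f' t‖ ≤ C) :
    ‖f b - f a‖ ≤ C * (b - a) := by
  rcases hab.eq_or_lt with rfl | hab
  · simp
  obtain ⟨ℓ, hℓ, hℓf⟩ := exists_dual_vector'' ℝ (f b - f a)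
  obtain ⟨c, hc, hslope⟩ := exists_hasDerivAt_eq_slope (fun t => ℓ (f t)) (fun t => ℓ (f' t)) hab
    (ℓ.continuous.comp_continuousOn hf) (fun t ht => ℓ.hasFDerivAt.comp_hasDerivAt t (hf' t ht))
  have hℓf' : ℓ (f' c) ≤ C := by
    calc ℓ (f' c) ≤ ‖ℓ‖ * ‖f' c‖ := (le_abs_self _).trans (ℓ.le_opNorm _)
      _ ≤ 1 * C := mul_le_mul hℓ (bound c hc) (norm_nonneg _) zero_le_one
      _ = C := one_mul C
  rw [← map_sub, hℓf, RCLike.ofReal_real_eq_id, id, eq_div_iff (sub_pos.2 hab).ne'] at hslope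
  rw [← hslope]
  exact mul_le_mul_of_nonneg_right hℓf' (sub_pos.2 hab).le

theorem sDeriv_mean_value_inequality_general {X Y : Type*} [NormedAddCommGroup X] [NormedSpace ℝ X]
    [NormedAddCommGroup Y] [NormedSpace ℝ Y]
    {S : Set X} (hS : StarCvx S) (hbal : ∀ k ∈ S, -k ∈ S) {U : Set X} {φ : X → Y}
    (D : X → spanCl S →L[ℝ] Y) (hd : ∀ z ∈ SInterior S U, HasSDerivAt S φ (D z) z)
    {x h : X} (hh : h ∈ S)
    (hseg : ∀ t : ℝ, 0 ≤ t → t ≤ 1 → x + t • h ∈ SInterior S U)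
    (C : ℝ) (hC : ∀ t : ℝ, 0 < t → t < 1 → ‖D (x + t • h)‖ ≤ C) :
    ‖φ (x + h) - φ x‖ ≤ C * ‖h‖ := by
  have hderiv : ∀ t ∈ Icc (0 : ℝ) 1, HasDerivWithinAt (fun s => φ (x + s • h))
      (D (x + t • h) ⟨h, mem_spanCl hh⟩) (Icc 0 1) t := fun t ht =>
    (hd _ (hseg t ht.1 ht.2)).hasDerivWithinAt_comp_add_smul hh fun s hs =>
      hS.smul_mem_of_abs_le_one hbal hh (abs_sub_le_iff.2 ⟨by linarith [hs.2, ht.1],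
        by linarith [hs.1, ht.2]⟩)
  have hbound : ∀ t ∈ Ioo (0 : ℝ) 1, ‖D (x + t • h) ⟨h, mem_spanCl hh⟩‖ ≤ C * ‖h‖ :=
    fun t ht => ((D _).le_opNorm _).trans
      (mul_le_mul_of_nonneg_right (hC t ht.1 ht.2) (norm_nonneg h))
  simpa using norm_image_sub_le_of_norm_deriv_le_Ioo zero_le_one
    (fun t ht => (hderiv t ht).continuousWithinAt)
    (fun t ht => (hderiv t (Ioo_subset_Icc_self ht)).hasDerivAt (Icc_mem_nhds ht.1 ht.2)) hbound

/-- mean value inequality for the oriented derivative. -/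
theorem sDeriv_mean_value_inequality {X Y : Type*} [NormedAddCommGroup X] [NormedSpace ℝ X]
    [CompleteSpace X] [NormedAddCommGroup Y] [NormedSpace ℝ Y] [CompleteSpace Y]
    {S : Set X} (hS : StarCvx S) (hbal : ∀ k ∈ S, -k ∈ S) {U : Set X} {φ : X → Y}
    (D : X → spanCl S →L[ℝ] Y) (hd : ∀ z ∈ SInterior S U, HasSDerivAt S φ (D z) z)
    {x h : X} (hxU : x ∈ U) (hh : h ∈ S)
    (hseg : ∀ t : ℝ, 0 ≤ t → t ≤ 1 → x + t • h ∈ SInterior S U)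
    (C : ℝ) (hC : ∀ t : ℝ, 0 < t → t < 1 → ‖D (x + t • h)‖ ≤ C) :
    ‖φ (x + h) - φ x‖ ≤ C * ‖h‖ :=
  sDeriv_mean_value_inequality_general hS hbal D hd hh hseg C hC
end

section
/- Fundamental theorem for the oriented derivative: if S is balanced, φ : U → Y is continuously S-differentiable, and (x,h) ∈ U × S satisfies [x,x+h] ⊆ U_S°, then φ(x+h) = φ(x) + ∫₀¹ D_Sφ(x+th)(h) dt. -/
open Filter Topology Set RealInnerProductSpace

/-! Along the segment `s ↦ x + s • h` every increment `(s - t) • h` with `|s - t| ≤ 1` lies in `S`,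
because `S` is balanced. Hence `S`-differentiability and `S`-continuity restrict to ordinary
differentiability and continuity of `s ↦ φ (x + s • h)` and `s ↦ D (x + s • h) h`, and the
theorem is the fundamental theorem of calculus on `[0, 1]`. -/

section OrientedDerivative

variable {X Y : Type*} [NormedAddCommGroup X] [NormedSpace ℝ X]
  [NormedAddCommGroup Y] [NormedSpace ℝ Y] {S : Set X}

theorem StarCvx.balanced (hS : StarCvx S) (hneg : ∀ k ∈ S, -k ∈ S) : Balanced ℝ S := by
  refine balanced_iff_smul_mem.mpr fun a ha k hk => ?_
  rw [Real.norm_eq_abs] at ha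
  rcases le_or_gt 0 a with ha₀ | ha₀
  · exact hS k hk a ha₀ ((le_abs_self a).trans ha)
  · rw [← neg_smul_neg]
    exact hS (-k) (hneg k hk) (-a) (by linarith) ((neg_le_abs a).trans ha)

theorem Balanced.tendsto_sub_smul_nhdsWithin_zero (hS : Balanced ℝ S) {h : X} (hh : h ∈ S)
    (t : ℝ) : Tendsto (fun s : ℝ => (s - t) • h) (𝓝 t) (𝓝[S] 0) := by
  refine tendsto_nhdsWithin_iff.mpr ⟨?_, ?_⟩
  · have hcont : Continuous fun s : ℝ => (s - t) • h := by fun_prop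
    simpa using hcont.tendsto t
  · filter_upwards [Metric.closedBall_mem_nhds t zero_lt_one] with s hs
    exact hS.smul_mem (by simpa [Real.dist_eq] using hs) hh

theorem Balanced.eventually_sub_smul_mem (hS : Balanced ℝ S) {h : X} (hh : h ∈ S) (t : ℝ)
    {δ : ℝ} (hδ : 0 < δ) : ∀ᶠ s in 𝓝 t, (s - t) • h ∈ S ∧ ‖(s - t) • h‖ < δ := by
  filter_upwards [(hS.tendsto_sub_smul_nhdsWithin_zero hh t).eventually
    (inter_mem_nhdsWithin S (Metric.ball_mem_nhds 0 hδ))] with s hs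
  exact ⟨hs.1, mem_ball_zero_iff.mp hs.2⟩

theorem SContAt.continuousAt_comp_add_smul {f : X → Y} {x h : X} {t : ℝ} (hS : Balanced ℝ S)
    (hh : h ∈ S) (hf : SContAt S f (x + t • h)) : ContinuousAt (fun s : ℝ => f (x + s • h)) t := by
  refine Metric.tendsto_nhds.mpr fun ε hε => ?_
  obtain ⟨δ, hδ, hfδ⟩ := hf (ε / 2) (half_pos hε)
  filter_upwards [hS.eventually_sub_smul_mem hh t hδ] with s ⟨hsS, hsδ⟩
  have hclose := hfδ _ hsS hsδ
  rw [show x + t • h + (s - t) • h = x + s • h by module] at hclose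
  rw [dist_eq_norm]
  linarith

theorem HasSDerivAt.hasDerivAt_comp_add_smul {φ : X → Y} {L : spanCl S →L[ℝ] Y} {x h : X}
    {t : ℝ} (hS : Balanced ℝ S) (hh : h ∈ S) (hφ : HasSDerivAt S φ L (x + t • h)) :
    HasDerivAt (fun s : ℝ => φ (x + s • h)) (L ⟨h, mem_spanCl hh⟩) t := by
  rw [hasDerivAt_iff_isLittleO, Asymptotics.isLittleO_iff]
  intro c hc
  obtain ⟨δ, hδ, hφδ⟩ := hφ (c / (‖h‖ + 1)) (by positivity)
  filter_upwards [hS.eventually_sub_smul_mem hh t hδ] with s ⟨hsS, hsδ⟩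
  have hlin : L ⟨(s - t) • h, mem_spanCl hsS⟩ = (s - t) • L ⟨h, mem_spanCl hh⟩ :=
    map_smul L (s - t) ⟨h, mem_spanCl hh⟩
  have happrox := hφδ _ hsS hsδ
  rw [show x + t • h + (s - t) • h = x + s • h by module, hlin] at happrox
  calc _ ≤ c / (‖h‖ + 1) * ‖(s - t) • h‖ := happrox
    _ = c * ‖s - t‖ * (‖h‖ / (‖h‖ + 1)) := by rw [norm_smul]; ring
    _ ≤ c * ‖s - t‖ * 1 := by
        gcongr
        exact (div_le_one (by positivity)).mpr (by linarith)
    _ = c * ‖s - t‖ := mul_one _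

end OrientedDerivative

theorem sDeriv_integral_mean_value_general {X Y : Type*} [NormedAddCommGroup X] [NormedSpace ℝ X]
    [NormedAddCommGroup Y] [NormedSpace ℝ Y] [CompleteSpace Y]
    {S : Set X} (hS : StarCvx S) (hbal : ∀ k ∈ S, -k ∈ S) {U : Set X} {φ : X → Y}
    (D : X → spanCl S →L[ℝ] Y) (hd : ∀ z ∈ SInterior S U, HasSDerivAt S φ (D z) z)
    (hDc : ∀ z ∈ SInterior S U, SContAt S D z)
    {x h : X} (hh : h ∈ S)
    (hseg : ∀ t : ℝ, 0 ≤ t → t ≤ 1 → x + t • h ∈ SInterior S U) :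
    φ (x + h) = φ x + ∫ t in (0:ℝ)..1, D (x + t • h) ⟨h, mem_spanCl hh⟩ := by
  have hSbal := hS.balanced hbal
  have hmem : ∀ t ∈ uIcc (0:ℝ) 1, x + t • h ∈ SInterior S U := by
    intro t ht
    rw [uIcc_of_le zero_le_one] at ht
    exact hseg t ht.1 ht.2
  have hderiv : ∀ t ∈ uIcc (0:ℝ) 1,
      HasDerivAt (fun s : ℝ => φ (x + s • h)) (D (x + t • h) ⟨h, mem_spanCl hh⟩) t :=
    fun t ht => (hd _ (hmem t ht)).hasDerivAt_comp_add_smul hSbal hh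
  have hcont : ContinuousOn (fun t : ℝ => D (x + t • h) ⟨h, mem_spanCl hh⟩) (uIcc 0 1) :=
    fun t ht => (((hDc _ (hmem t ht)).continuousAt_comp_add_smul hSbal hh).clm_apply
      continuousAt_const).continuousWithinAt
  rw [intervalIntegral.integral_eq_sub_of_hasDerivAt hderiv hcont.intervalIntegrable,
    one_smul, zero_smul, add_zero]
  abel

/-- fundamental theorem for the oriented derivative. -/
theorem sDeriv_integral_mean_value {X Y : Type*} [NormedAddCommGroup X] [NormedSpace ℝ X]
    [CompleteSpace X] [NormedAddCommGroup Y] [NormedSpace ℝ Y] [CompleteSpace Y]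
    {S : Set X} (hS : StarCvx S) (hbal : ∀ k ∈ S, -k ∈ S) {U : Set X} {φ : X → Y}
    (D : X → spanCl S →L[ℝ] Y) (hd : ∀ z ∈ SInterior S U, HasSDerivAt S φ (D z) z)
    (hDc : ∀ z ∈ SInterior S U, SContAt S D z)
    {x h : X} (hxU : x ∈ U) (hh : h ∈ S)
    (hseg : ∀ t : ℝ, 0 ≤ t → t ≤ 1 → x + t • h ∈ SInterior S U) :
    φ (x + h) = φ x + ∫ t in (0:ℝ)..1, D (x + t • h) ⟨h, mem_spanCl hh⟩ :=
  sDeriv_integral_mean_value_general hS hbal D hd hDc hh hseg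
end
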